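/- arXiv:1006.4357 — 2 statements merged into one kernel-verified Lean document; each statement's English description precedes it below -/
import Mathlib

section
/- Let $F_1$ and $F_2$ be subgraphs of a graph $G$ and let $F = F_1 \cup F_2$. Suppose $W \subseteq V(G)$ is a set of vertices such that $V(F_1) \cap V(F_2) \subseteq W$. Let $\alpha_\ell$ (for $\ell = 1,2$) be the partition of $W \cap V(F_\ell)$ induced by connectivity in $F_\ell$, extended to $W$ by singletons, and let $\alpha$ be the partition of $W$ induced by connectivity in $F$. Then $\alpha = \alpha_1 \vee \alpha_2$. -/
/-!
Connectivity in `F₁ ⊔ F₂` is generated by its two halves: a walk in `F₁ ⊔ F₂` alternates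
between stretches inside `F₁` and stretches inside `F₂`, and every vertex where it switches
sides carries edges of both, so lies in `V(F₁) ∩ V(F₂) ⊆ W`. Cutting the walk at those
vertices exhibits the endpoints as related in `α₁ ∨ α₂`. On spanning graphs, "equal or
reachable in `F`" becomes plain reachability.
-/

open Relation

namespace SimpleGraph

variable {V : Type*}

theorem Reachable.eq_or_mem_support {G : SimpleGraph V} {u v : V} (h : G.Reachable u v) :
    v = u ∨ v ∈ G.support := by
  rw [reachable_iff_reflTransGen] at h
  obtain rfl | ⟨w, -, hwv⟩ := h.cases_tail
  · exact Or.inl rfl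
  · exact Or.inr hwv.symm.mem_support_left

section Sup

variable {H₁ H₂ : SimpleGraph V} {W : Set V}

theorem mem_of_reachable_of_adj (hW : H₁.support ∩ H₂.support ⊆ W) {w x y : V} (hw : w ∈ W)
    (hwx : H₁.Reachable w x) (hxy : H₂.Adj x y) : x ∈ W := by
  obtain rfl | hx := hwx.eq_or_mem_support
  · exact hw
  · exact hW ⟨hx, hxy.mem_support_left⟩

theorem exists_reflTransGen_reachable_of_reachable_sup (hW : H₁.support ∩ H₂.support ⊆ W)
    {u x : V} (hu : u ∈ W) (h : (H₁ ⊔ H₂).Reachable u x) :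
    ∃ w ∈ W, ReflTransGen (fun a b => a ∈ W ∧ b ∈ W ∧ (H₁.Reachable a b ∨ H₂.Reachable a b)) u w ∧
      (H₁.Reachable w x ∨ H₂.Reachable w x) := by
  rw [reachable_iff_reflTransGen] at h
  induction h with
  | refl => exact ⟨u, hu, .refl, .inl .rfl⟩
  | @tail x y _ hxy ih =>
    obtain ⟨w, hw, huw, hwx⟩ := ih
    rcases hxy with hxy | hxy
    · rcases hwx with hwx | hwx
      · exact ⟨w, hw, huw, .inl (hwx.trans hxy.reachable)⟩
      · have hx := mem_of_reachable_of_adj (Set.inter_comm _ _ ▸ hW) hw hwx hxy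
        exact ⟨x, hx, huw.tail ⟨hw, hx, .inr hwx⟩, .inl hxy.reachable⟩
    · rcases hwx with hwx | hwx
      · have hx := mem_of_reachable_of_adj hW hw hwx hxy
        exact ⟨x, hx, huw.tail ⟨hw, hx, .inl hwx⟩, .inr hxy.reachable⟩
      · exact ⟨w, hw, huw, .inr (hwx.trans hxy.reachable)⟩

theorem reachable_sup_iff_reflTransGen (hW : H₁.support ∩ H₂.support ⊆ W) {u v : V}
    (hu : u ∈ W) (hv : v ∈ W) :
    (H₁ ⊔ H₂).Reachable u v ↔
      ReflTransGen (fun a b => a ∈ W ∧ b ∈ W ∧ (H₁.Reachable a b ∨ H₂.Reachable a b)) u v := by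
  constructor
  · intro h
    obtain ⟨w, hw, huw, hwv⟩ := exists_reflTransGen_reachable_of_reachable_sup hW hu h
    exact huw.tail ⟨hw, hv, hwv⟩
  · intro h
    clear hv
    induction h with
    | refl => rfl
    | tail _ hab ih => exact ih.trans (hab.2.2.elim (·.mono le_sup_left) (·.mono le_sup_right))

end Sup

namespace Subgraph

variable {G : SimpleGraph V}

theorem support_spanningCoe_subset_verts (F : G.Subgraph) : F.spanningCoe.support ⊆ F.verts :=
  fun _ ⟨_, h⟩ => F.edge_vert h

theorem spanningCoe_reachable_iff (F : G.Subgraph) {a b : V} :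
    F.spanningCoe.Reachable a b ↔
      a = b ∨ ∃ (ha : a ∈ F.verts) (hb : b ∈ F.verts), F.coe.Reachable ⟨a, ha⟩ ⟨b, hb⟩ := by
  constructor
  · intro h
    rw [reachable_iff_reflTransGen] at h
    induction h with
    | refl => exact .inl rfl
    | @tail x y _ hxy ih =>
      have hy := F.edge_vert hxy.symm
      have hxy' : F.coe.Reachable ⟨x, F.edge_vert hxy⟩ ⟨y, hy⟩ := Adj.reachable hxy
      rcases ih with rfl | ⟨ha, _, hax⟩
      · exact .inr ⟨_, hy, hxy'⟩
      · exact .inr ⟨ha, hy, hax.trans hxy'⟩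
  · rintro (rfl | ⟨ha, hb, h⟩)
    · rfl
    · exact h.map (⟨Subtype.val, id⟩ : F.coe →g F.spanningCoe)

end Subgraph

end SimpleGraph

open SimpleGraph

/-- Let `F₁`, `F₂` be subgraphs of `G`, `F = F₁ ⊔ F₂`, and let `W` contain
`V(F₁) ∩ V(F₂)`. For vertices of `W`, the partition induced by connectivity in `F`
(extended by singletons) is the join of the partitions induced by connectivity in
`F₁` and `F₂` (each extended to `W` by singletons). -/
theorem stmt_4 {V : Type*} (G : SimpleGraph V) (F₁ F₂ : G.Subgraph) (W : Set V)
    (hW : F₁.verts ∩ F₂.verts ⊆ W) (u v : V) (hu : u ∈ W) (hv : v ∈ W) :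
    (u = v ∨ ∃ (hu' : u ∈ (F₁ ⊔ F₂).verts) (hv' : v ∈ (F₁ ⊔ F₂).verts),
        (F₁ ⊔ F₂).coe.Reachable ⟨u, hu'⟩ ⟨v, hv'⟩) ↔
      Relation.ReflTransGen
        (fun a b =>
          (a ∈ W ∧ b ∈ W ∧ (a = b ∨ ∃ (ha : a ∈ F₁.verts) (hb : b ∈ F₁.verts),
              F₁.coe.Reachable ⟨a, ha⟩ ⟨b, hb⟩)) ∨
          (a ∈ W ∧ b ∈ W ∧ (a = b ∨ ∃ (ha : a ∈ F₂.verts) (hb : b ∈ F₂.verts),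
              F₂.coe.Reachable ⟨a, ha⟩ ⟨b, hb⟩)))
        u v := by
  have hW' : F₁.spanningCoe.support ∩ F₂.spanningCoe.support ⊆ W :=
    (Set.inter_subset_inter F₁.support_spanningCoe_subset_verts
      F₂.support_spanningCoe_subset_verts).trans hW
  simp only [← Subgraph.spanningCoe_reachable_iff, ← and_or_left]
  exact reachable_sup_iff_reflTransGen hW' hu hv
end

section
/- Let $F^*$ be a forest in a graph $G$ and let $X$ be a set of terminal pairs, all connected by $F^*$, with penalties $\pi_i \ge 0$. Suppose feasible dual variables $y_{i,S} \ge 0$ satisfy the edge packing constraints $\sum_{S : e \in \delta(S)} \sum_i y_{i,S} \le c_e$ and additionally $\sum_{S \in \mathcal{S}_i} y_{i,S} \ge \pi'_i/2$ for every $i \in X$, where $\pi'_i = (2/\varepsilon)\pi_i$. Then $\sum_{i \in X} \pi_i \le \varepsilon \sum_{e \in F^*} c_e$. -/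
open scoped Classical

/-- The edge `e` has exactly one endpoint in `S`, i.e. `e ∈ δ(S)`. -/
def InCut {V : Type*} (S : Finset V) (e : V × V) : Prop :=
  (e.1 ∈ S ∧ e.2 ∉ S) ∨ (e.1 ∉ S ∧ e.2 ∈ S)

/-- The vertex set `S` separates `a` from `b`, i.e. `S ∈ 𝒮ᵢ` for the pair `(a,b)`. -/
def Separates {V : Type*} (S : Finset V) (a b : V) : Prop :=
  (a ∈ S ∧ b ∉ S) ∨ (a ∉ S ∧ b ∈ S)

/-- `a` and `b` are connected by the edge set `F`. -/
def ConnectedIn {V : Type*} (F : Finset (V × V)) (a b : V) : Prop :=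
  Relation.ReflTransGen (fun x y => (x, y) ∈ F ∨ (y, x) ∈ F) a b

/-!
Weak duality for Steiner forest: every set `S` separating a pair connected by `F*` is crossed
by an edge of `F*`, so the dual mass `∑_{S ∈ 𝒮ᵢ} y i S` of the pairs in `X` is charged to edges
of `F*`, where the packing constraints bound it by `∑_{e ∈ F*} c e`. The lower bound
`π i / ε ≤ ∑_{S ∈ 𝒮ᵢ} y i S` then gives the claim.
-/

lemma ConnectedIn.exists_inCut {V : Type*} {F : Finset (V × V)} {S : Finset V} {a b : V}
    (h : ConnectedIn F a b) (hS : Separates S a b) : ∃ e ∈ F, InCut S e := by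
  induction h with
  | refl => unfold Separates at hS; tauto
  | @tail m b' _ hedge ih =>
    by_cases hsep : Separates S m b'
    · unfold Separates at hsep
      rcases hedge with he | he
      · exact ⟨_, he, by unfold InCut; tauto⟩
      · exact ⟨_, he, by unfold InCut; tauto⟩
    · exact ih (by unfold Separates at *; tauto)

lemma ConnectedIn.sum_separates_le_sum_inCut {V : Type*} [Fintype V] {F : Finset (V × V)}
    {a b : V} (h : ConnectedIn F a b) (w : Finset V → ℝ) (hw : ∀ S, 0 ≤ w S) :
    ∑ S : Finset V, (if Separates S a b then w S else 0) ≤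
      ∑ e ∈ F, ∑ S : Finset V, (if InCut S e ∧ Separates S a b then w S else 0) := by
  rw [Finset.sum_comm]
  refine Finset.sum_le_sum fun S _ => ?_
  have hterm_nonneg : ∀ e ∈ F, 0 ≤ if InCut S e ∧ Separates S a b then w S else 0 :=
    fun e _ => by split <;> simp [hw]
  split_ifs with hS
  · obtain ⟨e, he, hcut⟩ := h.exists_inCut hS
    simpa [hcut, hS] using Finset.single_le_sum hterm_nonneg he
  · exact Finset.sum_nonneg hterm_nonneg

theorem sum_separates_le_sum_cost {V : Type*} [Fintype V] {ι : Type*} [Fintype ι]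
    (c : V × V → ℝ) (s t : ι → V) (y : ι → Finset V → ℝ) (X : Finset ι) (F : Finset (V × V))
    (hy : ∀ i S, 0 ≤ y i S)
    (hpack : ∀ e ∈ F,
      ∑ S : Finset V, ∑ i : ι,
        (if InCut S e ∧ Separates S (s i) (t i) then y i S else 0) ≤ c e)
    (hconn : ∀ i ∈ X, ConnectedIn F (s i) (t i)) :
    ∑ i ∈ X, ∑ S : Finset V, (if Separates S (s i) (t i) then y i S else 0) ≤
      ∑ e ∈ F, c e := by
  have hterm_nonneg : ∀ i S e,
      0 ≤ if InCut S e ∧ Separates S (s i) (t i) then y i S else 0 :=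
    fun i S e => by split <;> simp [hy]
  calc ∑ i ∈ X, ∑ S : Finset V, (if Separates S (s i) (t i) then y i S else 0)
      ≤ ∑ i ∈ X, ∑ e ∈ F, ∑ S : Finset V,
          (if InCut S e ∧ Separates S (s i) (t i) then y i S else 0) :=
        Finset.sum_le_sum fun i hi =>
          (hconn i hi).sum_separates_le_sum_inCut (y i) (hy i)
    _ ≤ ∑ i : ι, ∑ e ∈ F, ∑ S : Finset V,
          (if InCut S e ∧ Separates S (s i) (t i) then y i S else 0) :=
        Finset.sum_le_sum_of_subset_of_nonneg (Finset.subset_univ X) fun i _ _ =>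
          Finset.sum_nonneg fun e _ => Finset.sum_nonneg fun S _ => hterm_nonneg i S e
    _ = ∑ e ∈ F, ∑ S : Finset V, ∑ i : ι,
          (if InCut S e ∧ Separates S (s i) (t i) then y i S else 0) := by
        rw [Finset.sum_comm]
        exact Finset.sum_congr rfl fun e _ => Finset.sum_comm
    _ ≤ ∑ e ∈ F, c e := Finset.sum_le_sum hpack

theorem stmt_11_general {V : Type*} [Fintype V] {ι : Type*} [Fintype ι]
    (E : Finset (V × V)) (c : V × V → ℝ) (s t : ι → V) (π : ι → ℝ) (ε : ℝ)
    (y : ι → Finset V → ℝ) (X : Finset ι)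
    (hε : 0 < ε)
    (hy : ∀ i S, 0 ≤ y i S)
    (hedge : ∀ e ∈ E,
      ∑ S : Finset V, ∑ i : ι,
        (if InCut S e ∧ Separates S (s i) (t i) then y i S else 0) ≤ c e)
    (Fstar : Finset (V × V)) (hFstar : Fstar ⊆ E)
    (hconn : ∀ i ∈ X, ConnectedIn Fstar (s i) (t i))
    (hlow : ∀ i ∈ X, ((2 / ε) * π i) / 2 ≤
        ∑ S : Finset V, (if Separates S (s i) (t i) then y i S else 0)) :
    ∑ i ∈ X, π i ≤ ε * ∑ e ∈ Fstar, c e := by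
  have hlow' : ∀ i ∈ X, π i / ε ≤
      ∑ S : Finset V, (if Separates S (s i) (t i) then y i S else 0) := fun i hi => by
    convert hlow i hi using 1
    field_simp
  have hdual : (∑ i ∈ X, π i) / ε ≤ ∑ e ∈ Fstar, c e := by
    rw [Finset.sum_div]
    exact (Finset.sum_le_sum hlow').trans <|
      sum_separates_le_sum_cost c s t y X Fstar hy (fun e he => hedge e (hFstar he)) hconn
  rwa [div_le_iff₀' hε] at hdual

/-- If a forest `F*` connects all pairs of `X`, and feasible dual variables `y` satisfy
the edge packing constraints together with `∑_{S ∈ 𝒮ᵢ} y i S ≥ π'ᵢ/2` for all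
`i ∈ X`, where `π'ᵢ = (2/ε) πᵢ`, then `∑_{i ∈ X} πᵢ ≤ ε ⋅ Length(F*)`. -/
theorem stmt_11 {V : Type*} [Fintype V] [DecidableEq V] {ι : Type*} [Fintype ι]
    (E : Finset (V × V)) (c : V × V → ℝ) (s t : ι → V) (π : ι → ℝ) (ε : ℝ)
    (y : ι → Finset V → ℝ) (X : Finset ι)
    (hc : ∀ e ∈ E, 0 ≤ c e) (hπ : ∀ i, 0 ≤ π i) (hε : 0 < ε)
    (hy : ∀ i S, 0 ≤ y i S)
    (hedge : ∀ e ∈ E,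
      ∑ S : Finset V, ∑ i : ι,
        (if InCut S e ∧ Separates S (s i) (t i) then y i S else 0) ≤ c e)
    (Fstar : Finset (V × V)) (hFstar : Fstar ⊆ E)
    (hconn : ∀ i ∈ X, ConnectedIn Fstar (s i) (t i))
    (hlow : ∀ i ∈ X, ((2 / ε) * π i) / 2 ≤
        ∑ S : Finset V, (if Separates S (s i) (t i) then y i S else 0)) :
    ∑ i ∈ X, π i ≤ ε * ∑ e ∈ Fstar, c e :=
  stmt_11_general E c s t π ε y X hε hy hedge Fstar hFstar hconn hlow
end
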